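/- Let X ⊆ ℝ^D be open and d ≥ 0. The apply operator (f, x) ↦ f(x) of Σ_{d+1}-lowersemimeasurable functions on X is ([ρ→ρ_<^{(d)}] × ρ → ρ_<^{(d)})-continuous: there exists a continuous function Φ, defined on the set of all pairs (s, p) where s is a [ρ→ρ_<^{(d)}]-name of some Σ_{d+1}-lowersemimeasurable f : X → ℝ and p is a ρ-name of some x ∈ X, such that Φ(s,p) is a ρ_<^{(d)}-name of f(x). -/

import Mathlib

open Filter Topology

/- The name spaces are products of countable discrete sets; `ℚ` is taken discrete. -/
local instance : TopologicalSpace ℚ := ⊥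

/-- Alternating suprema/infima in `EReal`; `true` starts with a supremum.
`AltSupInf k b q` has `k+1` alternating sup/inf levels. -/
noncomputable def AltSupInf : ℕ → Bool → (ℕ → EReal) → EReal
  | 0, b, q => if b then ⨆ n, q n else ⨅ n, q n
  | k+1, b, q =>
      if b then ⨆ n, AltSupInf k false (fun m => q (Nat.pair n m))
      else ⨅ n, AltSupInf k true (fun m => q (Nat.pair n m))

/-- ρ_<^{(k)}-name of a real: `x = sup inf sup ⋯` (`k+1` alternating sup/inf,
starting with sup, taken in ℝ ∪ {±∞}). -/
noncomputable def IsRhoLtKName (k : ℕ) (q : ℕ → ℚ) (x : ℝ) : Prop :=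
  (x : EReal) = AltSupInf k true (fun n => ((q n : ℝ) : EReal))

/-- ρ-name of a point of ℝ^D: `|x - q n| ≤ 2^{-n}` for all `n`. -/
def IsRhoVecName (D : ℕ) (q : ℕ → (Fin D → ℚ)) (x : EuclideanSpace ℝ (Fin D)) : Prop :=
  ∀ n : ℕ, dist x (WithLp.toLp 2 (fun i => ((q n i : ℝ))) : EuclideanSpace ℝ (Fin D)) ≤ (2 : ℝ) ^ (-(n : ℤ))

/-- Borel classes: `SigmaClass X d` is the class Σ_{d+1}(X); so `SigmaClass X 0`
consists of the open subsets of `X`, and `SigmaClass X d` of countable unions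
of complements (within `X`) of members of `SigmaClass X (d-1)`. -/
def SigmaClass {E : Type*} [TopologicalSpace E] (X : Set E) : ℕ → Set (Set E)
  | 0 => {S | IsOpen S ∧ S ⊆ X}
  | d+1 => {S | ∃ T : ℕ → Set E, (∀ m, T m ∈ SigmaClass X d) ∧ S = ⋃ m, X \ T m}

/-- The open euclidean ball in ℝ^D with rational center and radius (empty if `r ≤ 0`). -/
def ratBall (D : ℕ) (c : Fin D → ℚ) (r : ℚ) : Set (EuclideanSpace ℝ (Fin D)) :=
  Metric.ball (WithLp.toLp 2 (fun i => ((c i : ℝ))) : EuclideanSpace ℝ (Fin D)) (r : ℝ)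

/-- `IsSigmaName D X d p S` : `p` is a δ_{Σ_{d+1}}-name of `S ∈ Σ_{d+1}(X)`:
for `d = 0`, a θ_<-name (a list of rational open balls inside `X` whose union is `S`);
for `d+1`, via the pairing a sequence of δ_{Σ_d}-names of sets `T m` with
`S = ⋃ m, X ∖ T m`. -/
def IsSigmaName (D : ℕ) (X : Set (EuclideanSpace ℝ (Fin D))) :
    ℕ → (ℕ → (Fin D → ℚ) × ℚ) → Set (EuclideanSpace ℝ (Fin D)) → Prop
  | 0, p, S => (∀ k, ratBall D (p k).1 (p k).2 ⊆ X) ∧ S = ⋃ k, ratBall D (p k).1 (p k).2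
  | d+1, p, S => ∃ T : ℕ → Set (EuclideanSpace ℝ (Fin D)),
      (∀ m, IsSigmaName D X d (fun k => p (Nat.pair m k)) (T m)) ∧ S = ⋃ m, X \ T m

/-- `f` is Σ_{d+1}-lowersemimeasurable on `X`: `f⁻¹((y,∞)) ∈ Σ_{d+1}(X)` for all real `y`. -/
def IsLowerSemiMeasurable (D : ℕ) (X : Set (EuclideanSpace ℝ (Fin D))) (d : ℕ)
    (f : EuclideanSpace ℝ (Fin D) → ℝ) : Prop :=
  ∀ y : ℝ, {x ∈ X | y < f x} ∈ SigmaClass X d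

/-- A [ρ→ρ_<^{(d)}]-name of `f` (w.r.t. the enumeration `e` of ℚ): via the pairing,
a sequence whose `j`-th component is a δ_{Σ_{d+1}}-name of `f⁻¹((e j, ∞))`. -/
def IsFuncLtName (D : ℕ) (X : Set (EuclideanSpace ℝ (Fin D))) (d : ℕ) (e : ℕ ≃ ℚ)
    (s : ℕ → (Fin D → ℚ) × ℚ) (f : EuclideanSpace ℝ (Fin D) → ℝ) : Prop :=
  ∀ j : ℕ, IsSigmaName D X d (fun k => s (Nat.pair j k)) {x ∈ X | ((e j : ℚ) : ℝ) < f x}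


/-! ### Auxiliary development -/

section StmtAux

open Classical

variable (D : ℕ)

/-- The real point corresponding to a rational vector. -/
def toEuc (c : Fin D → ℚ) : EuclideanSpace ℝ (Fin D) := WithLp.toLp 2 (fun i => ((c i : ℝ)))

/-- A finitary test certifying membership of the point named by `p` in `ratBall D c r`. -/
def ballTest (c : Fin D → ℚ) (r : ℚ) (q : Fin D → ℚ) (n : ℕ) : Prop :=
  dist (toEuc D q) (toEuc D c) + (2 : ℝ) ^ (-(n : ℤ)) < (r : ℝ)

lemma mem_ratBall_iff {c : Fin D → ℚ} {r : ℚ} {x : EuclideanSpace ℝ (Fin D)}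
    {p : ℕ → Fin D → ℚ} (hp : IsRhoVecName D p x) :
    x ∈ ratBall D c r ↔ ∃ n, ballTest D c r (p n) n := by
  constructor
  · intro hx
    have hx' : dist x (toEuc D c) < (r : ℝ) := by
      simpa [ratBall, toEuc, Metric.mem_ball] using hx
    obtain ⟨n, hn⟩ := exists_pow_lt_of_lt_one (by linarith : (0:ℝ) < ((r:ℝ) - dist x (toEuc D c)) / 2) (by norm_num : (1:ℝ)/2 < 1)
    refine ⟨n, ?_⟩
    have h2 : (2:ℝ) ^ (-(n:ℤ)) = ((1:ℝ)/2) ^ n := by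
      rw [zpow_neg, zpow_natCast, ← inv_pow]
      norm_num
    have hpn := hp n
    have htri : dist (toEuc D (p n)) (toEuc D c) ≤ dist x (toEuc D (p n)) + dist x (toEuc D c) := by
      rw [dist_comm x (toEuc D (p n))]
      exact dist_triangle _ _ _
    have hpn' : dist x (toEuc D (p n)) ≤ (2:ℝ) ^ (-(n:ℤ)) := hpn
    unfold ballTest
    rw [h2] at *
    nlinarith [dist_nonneg (x := x) (y := toEuc D (p n))]
  · rintro ⟨n, hn⟩
    unfold ballTest at hn
    have hpn : dist x (toEuc D (p n)) ≤ (2:ℝ) ^ (-(n:ℤ)) := hp n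
    have : dist x (toEuc D c) ≤ dist x (toEuc D (p n)) + dist (toEuc D (p n)) (toEuc D c) :=
      dist_triangle _ _ _
    have : dist x (toEuc D c) < (r : ℝ) := by linarith
    simpa [ratBall, toEuc, Metric.mem_ball] using this

lemma altSupInf_const (k : ℕ) (b : Bool) (c : EReal) :
    AltSupInf k b (fun _ => c) = c := by
  induction k generalizing b with
  | zero => cases b <;> simp [AltSupInf]
  | succ k ih => cases b <;> simp [AltSupInf, ih]

lemma ereal_iInf_eq_bot_of_sub {a : ℚ} {f : ℕ → EReal}
    (h : ∀ i : ℕ, ∃ c, f c ≤ (((a - (i:ℚ) : ℚ) : ℝ) : EReal)) : ⨅ c, f c = ⊥ := by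
  rw [iInf_eq_bot]
  intro b hb
  induction b using EReal.rec with
  | bot => exact absurd hb (lt_irrefl _)
  | top =>
    obtain ⟨c, hc⟩ := h 0
    exact ⟨c, lt_of_le_of_lt hc (by exact_mod_cast EReal.coe_lt_top _)⟩
  | coe r =>
    obtain ⟨i, hi⟩ := exists_nat_gt ((a : ℝ) - r)
    obtain ⟨c, hc⟩ := h i
    refine ⟨c, lt_of_le_of_lt hc ?_⟩
    rw [EReal.coe_lt_coe_iff]
    push_cast
    linarith

/- Sequences whose alternating infima/suprema semidecide membership in a `Σ_{d+1}` set.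
`SigSeq` (sup-first) takes value `a` on the set and `b` off it;
`PiSeq` (inf-first) takes value `a` off the set and `-∞` on it. -/
mutual
noncomputable def SigSeq : ℕ → (ℕ → (Fin D → ℚ) × ℚ) → (ℕ → Fin D → ℚ) → ℚ → ℚ → ℕ → ℚ
  | 0, t, p, a, b, m =>
      if ballTest D (t (Nat.unpair m).1).1 (t (Nat.unpair m).1).2
          (p (Nat.unpair m).2) (Nat.unpair m).2 then a else b
  | d+1, t, p, a, b, m =>
      if (Nat.unpair m).1 = 0 then b
      else PiSeq d (fun k => t (Nat.pair ((Nat.unpair m).1 - 1) k)) p a (Nat.unpair m).2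

noncomputable def PiSeq : ℕ → (ℕ → (Fin D → ℚ) × ℚ) → (ℕ → Fin D → ℚ) → ℚ → ℕ → ℚ
  | 0, t, p, a, m =>
      if ballTest D (t (Nat.unpair (Nat.unpair m).1).1).1 (t (Nat.unpair (Nat.unpair m).1).1).2
          (p (Nat.unpair (Nat.unpair m).1).2) (Nat.unpair (Nat.unpair m).1).2
      then a - ((Nat.unpair m).2 : ℚ) else a
  | d+1, t, p, a, m =>
      SigSeq d (fun k => t (Nat.pair (Nat.unpair (Nat.unpair m).1).1 k)) p a
        (a - ((Nat.unpair (Nat.unpair m).1).2 : ℚ)) (Nat.unpair m).2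
end

lemma sigPi_spec (X : Set (EuclideanSpace ℝ (Fin D))) (d : ℕ) :
    (∀ t T, IsSigmaName D X d t T → ∀ x, x ∈ X → ∀ p, IsRhoVecName D p x →
      ∀ a b : ℚ, b ≤ a →
      AltSupInf d true (fun m => ((SigSeq D d t p a b m : ℝ) : EReal))
        = if x ∈ T then (((a:ℝ)):EReal) else (((b:ℝ)):EReal)) ∧
    (∀ t T, IsSigmaName D X d t T → ∀ x, x ∈ X → ∀ p, IsRhoVecName D p x → ∀ a : ℚ,
      AltSupInf d false (fun m => ((PiSeq D d t p a m : ℝ) : EReal))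
        = if x ∈ T then ⊥ else (((a:ℝ)):EReal)) := by
  induction d with
  | zero =>
    constructor
    · intro t T hT x hx p hp a b hba
      obtain ⟨-, hTeq⟩ := hT
      have hmem : x ∈ T ↔ ∃ k n, ballTest D (t k).1 (t k).2 (p n) n := by
        rw [hTeq, Set.mem_iUnion]
        exact exists_congr fun k => mem_ratBall_iff D hp
      simp only [AltSupInf, if_true, SigSeq]
      by_cases hxT : x ∈ T
      · rw [if_pos hxT]
        obtain ⟨k, n, hkn⟩ := hmem.mp hxT
        apply le_antisymm
        · apply iSup_le
          intro m
          split_ifs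
          · exact le_rfl
          · exact_mod_cast hba
        · have := le_iSup (fun m => ((if ballTest D (t (Nat.unpair m).1).1
              (t (Nat.unpair m).1).2 (p (Nat.unpair m).2) (Nat.unpair m).2
              then a else b : ℚ) : ℝ) : ℕ → EReal) (Nat.pair k n)
          simpa [Nat.unpair_pair, hkn] using this
      · rw [if_neg hxT]
        have hno : ∀ k n, ¬ ballTest D (t k).1 (t k).2 (p n) n := by
          intro k n hkn
          exact hxT (hmem.mpr ⟨k, n, hkn⟩)
        have : ∀ m : ℕ, ((if ballTest D (t (Nat.unpair m).1).1 (t (Nat.unpair m).1).2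
            (p (Nat.unpair m).2) (Nat.unpair m).2 then a else b : ℚ) : ℝ)
            = ((b : ℝ)) := by
          intro m
          rw [if_neg (hno _ _)]
        calc (⨆ m, (((if ballTest D (t (Nat.unpair m).1).1 (t (Nat.unpair m).1).2
              (p (Nat.unpair m).2) (Nat.unpair m).2 then a else b : ℚ) : ℝ) : EReal))
            = ⨆ _ : ℕ, (((b:ℝ)) : EReal) := by
              exact iSup_congr fun m => by rw [this m]
          _ = (((b:ℝ)) : EReal) := iSup_const
    · intro t T hT x hx p hp a
      obtain ⟨-, hTeq⟩ := hT
      have hmem : x ∈ T ↔ ∃ k n, ballTest D (t k).1 (t k).2 (p n) n := by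
        rw [hTeq, Set.mem_iUnion]
        exact exists_congr fun k => mem_ratBall_iff D hp
      simp only [AltSupInf, if_false, Bool.false_eq_true, PiSeq]
      by_cases hxT : x ∈ T
      · rw [if_pos hxT]
        obtain ⟨k, n, hkn⟩ := hmem.mp hxT
        apply ereal_iInf_eq_bot_of_sub (a := a)
        intro i
        refine ⟨Nat.pair (Nat.pair k n) i, ?_⟩
        simp [Nat.unpair_pair, hkn]
      · rw [if_neg hxT]
        have hno : ∀ k n, ¬ ballTest D (t k).1 (t k).2 (p n) n := by
          intro k n hkn
          exact hxT (hmem.mpr ⟨k, n, hkn⟩)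
        calc (⨅ m, (((if ballTest D (t (Nat.unpair (Nat.unpair m).1).1).1
              (t (Nat.unpair (Nat.unpair m).1).1).2 (p (Nat.unpair (Nat.unpair m).1).2)
              (Nat.unpair (Nat.unpair m).1).2 then a - ((Nat.unpair m).2 : ℚ) else a : ℚ) : ℝ) : EReal))
            = ⨅ _ : ℕ, (((a:ℝ)) : EReal) := by
              exact iInf_congr fun m => by rw [if_neg (hno _ _)]
          _ = (((a:ℝ)) : EReal) := iInf_const
  | succ d ih =>
    constructor
    · intro t T hT x hx p hp a b hba
      obtain ⟨T', hT'₁, hT'₂⟩ := hT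
      have hmem : x ∈ T ↔ ∃ n, x ∉ T' n := by
        rw [hT'₂, Set.mem_iUnion]
        exact exists_congr fun n => by simp [hx]
      have hup : AltSupInf (d+1) true (fun m => ((SigSeq D (d+1) t p a b m : ℝ) : EReal))
          = ⨆ n, AltSupInf d false
              (fun m => ((SigSeq D (d+1) t p a b (Nat.pair n m) : ℝ) : EReal)) := by
        simp [AltSupInf]
      rw [hup]
      have hcomp : ∀ n, AltSupInf d false
          (fun m => ((SigSeq D (d+1) t p a b (Nat.pair n m) : ℝ) : EReal))
          = (match n with
             | 0 => (((b:ℝ)) : EReal)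
             | n+1 => if x ∈ T' n then ⊥ else (((a:ℝ)) : EReal)) := by
        intro n
        match n with
        | 0 =>
          have : (fun m => ((SigSeq D (d+1) t p a b (Nat.pair 0 m) : ℝ) : EReal))
              = fun _ => (((b:ℝ)) : EReal) := by
            funext m
            simp [SigSeq, Nat.unpair_pair]
          rw [this, altSupInf_const]
        | n+1 =>
          have : (fun m => ((SigSeq D (d+1) t p a b (Nat.pair (n+1) m) : ℝ) : EReal))
              = fun m => ((PiSeq D d (fun k => t (Nat.pair n k)) p a m : ℝ) : EReal) := by
            funext m
            simp [SigSeq, Nat.unpair_pair]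
          rw [this, ih.2 _ _ (hT'₁ n) x hx p hp a]
      simp only [hcomp]
      by_cases hxT : x ∈ T
      · rw [if_pos hxT]
        obtain ⟨n₀, hn₀⟩ := hmem.mp hxT
        apply le_antisymm
        · apply iSup_le
          intro n
          match n with
          | 0 =>
            show (((b:ℝ)):EReal) ≤ (((a:ℝ)):EReal)
            exact_mod_cast hba
          | n+1 =>
            show (if x ∈ T' n then ⊥ else (((a:ℝ)):EReal)) ≤ (((a:ℝ)):EReal)
            split_ifs
            · exact bot_le
            · exact le_rfl
        · have := le_iSup (fun n => (match n with
             | 0 => (((b:ℝ)) : EReal)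
             | n+1 => if x ∈ T' n then ⊥ else (((a:ℝ)) : EReal))) (n₀+1)
          simpa [hn₀] using this
      · rw [if_neg hxT]
        have hall : ∀ n, x ∈ T' n := by
          intro n
          by_contra hn
          exact hxT (hmem.mpr ⟨n, hn⟩)
        apply le_antisymm
        · apply iSup_le
          intro n
          match n with
          | 0 => exact le_rfl
          | n+1 =>
            show (if x ∈ T' n then ⊥ else (((a:ℝ)):EReal)) ≤ (((b:ℝ)):EReal)
            simp [hall n]
        · exact le_iSup (fun n => (match n with
             | 0 => (((b:ℝ)) : EReal)
             | n+1 => if x ∈ T' n then ⊥ else (((a:ℝ)) : EReal))) 0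
    · intro t T hT x hx p hp a
      obtain ⟨T', hT'₁, hT'₂⟩ := hT
      have hmem : x ∈ T ↔ ∃ n, x ∉ T' n := by
        rw [hT'₂, Set.mem_iUnion]
        exact exists_congr fun n => by simp [hx]
      have hup : AltSupInf (d+1) false (fun m => ((PiSeq D (d+1) t p a m : ℝ) : EReal))
          = ⨅ c, AltSupInf d true
              (fun m => ((PiSeq D (d+1) t p a (Nat.pair c m) : ℝ) : EReal)) := by
        simp [AltSupInf]
      rw [hup]
      have hcomp : ∀ c, AltSupInf d true
          (fun m => ((PiSeq D (d+1) t p a (Nat.pair c m) : ℝ) : EReal))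
          = if x ∈ T' (Nat.unpair c).1 then (((a:ℝ)) : EReal)
            else ((((a - ((Nat.unpair c).2 : ℚ) : ℚ) : ℝ)) : EReal) := by
        intro c
        have : (fun m => ((PiSeq D (d+1) t p a (Nat.pair c m) : ℝ) : EReal))
            = fun m => ((SigSeq D d (fun k => t (Nat.pair (Nat.unpair c).1 k)) p a
                (a - ((Nat.unpair c).2 : ℚ)) m : ℝ) : EReal) := by
          funext m
          simp [PiSeq, Nat.unpair_pair]
        rw [this, ih.1 _ _ (hT'₁ (Nat.unpair c).1) x hx p hp a _ ?_]
        · exact sub_le_self a (by positivity)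
      simp only [hcomp]
      by_cases hxT : x ∈ T
      · rw [if_pos hxT]
        obtain ⟨n₀, hn₀⟩ := hmem.mp hxT
        apply ereal_iInf_eq_bot_of_sub (a := a)
        intro i
        refine ⟨Nat.pair n₀ i, ?_⟩
        simp [Nat.unpair_pair, hn₀]
      · rw [if_neg hxT]
        have hall : ∀ n, x ∈ T' n := by
          intro n
          by_contra hn
          exact hxT (hmem.mpr ⟨n, hn⟩)
        calc (⨅ c, (if x ∈ T' (Nat.unpair c).1 then (((a:ℝ)) : EReal)
              else ((((a - ((Nat.unpair c).2 : ℚ) : ℚ) : ℝ)) : EReal)))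
            = ⨅ _ : ℕ, (((a:ℝ)) : EReal) := iInf_congr fun c => by rw [if_pos (hall _)]
          _ = (((a:ℝ)) : EReal) := iInf_const

lemma ereal_iSup_eq_real {z : ℝ} {g : ℕ → EReal}
    (hub : ∀ n, g n ≤ (z : EReal))
    (hdense : ∀ y : ℚ, (y:ℝ) < z → ∃ n, (((y:ℝ)) : EReal) ≤ g n) :
    ⨆ n, g n = (z : EReal) := by
  apply le_antisymm (iSup_le hub)
  rw [le_iSup_iff]
  intro b hb
  by_contra hzb
  have hbz : b < (z : EReal) := lt_of_not_ge hzb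
  have hrat : ∃ y : ℚ, b < (((y:ℝ)) : EReal) ∧ (y:ℝ) < z := by
    induction b using EReal.rec with
    | bot =>
      obtain ⟨y, hy⟩ := exists_rat_lt z
      exact ⟨y, EReal.bot_lt_coe _, hy⟩
    | top => exact absurd hbz (not_lt.mpr le_top)
    | coe r =>
      have hrz : r < z := EReal.coe_lt_coe_iff.mp hbz
      obtain ⟨y, hy1, hy2⟩ := exists_rat_btwn hrz
      exact ⟨y, EReal.coe_lt_coe_iff.mpr hy1, hy2⟩
  obtain ⟨y, hy1, hy2⟩ := hrat
  obtain ⟨n, hn⟩ := hdense y hy2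
  exact absurd (lt_of_lt_of_le hy1 (hn.trans (hb n))) (lt_irrefl _)

local instance : DiscreteTopology ℚ := ⟨rfl⟩

set_option maxHeartbeats 1000000 in
lemma sigPi_continuous (d : ℕ) :
    (∀ (a b : ℚ) (m : ℕ), Continuous fun tp : (ℕ → (Fin D → ℚ) × ℚ) × (ℕ → Fin D → ℚ) =>
       SigSeq D d tp.1 tp.2 a b m) ∧
    (∀ (a : ℚ) (m : ℕ), Continuous fun tp : (ℕ → (Fin D → ℚ) × ℚ) × (ℕ → Fin D → ℚ) =>
       PiSeq D d tp.1 tp.2 a m) := by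
  have hmap : ∀ (k n : ℕ), Continuous fun tp : (ℕ → (Fin D → ℚ) × ℚ) × (ℕ → Fin D → ℚ) =>
      ((tp.1 k, tp.2 n) : ((Fin D → ℚ) × ℚ) × (Fin D → ℚ)) := fun k n =>
    Continuous.prodMk ((continuous_apply k).comp continuous_fst)
      ((continuous_apply n).comp continuous_snd)
  have hremap : ∀ (g : ℕ → ℕ), Continuous fun tp : (ℕ → (Fin D → ℚ) × ℚ) × (ℕ → Fin D → ℚ) =>
      (((fun k => tp.1 (g k)), tp.2) : (ℕ → (Fin D → ℚ) × ℚ) × (ℕ → Fin D → ℚ)) := fun g =>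
    Continuous.prodMk (continuous_pi fun k => (continuous_apply (g k)).comp continuous_fst)
      continuous_snd
  induction d with
  | zero =>
    constructor
    · intro a b m
      have heq : (fun tp : (ℕ → (Fin D → ℚ) × ℚ) × (ℕ → Fin D → ℚ) =>
            SigSeq D 0 tp.1 tp.2 a b m)
          = (fun z : ((Fin D → ℚ) × ℚ) × (Fin D → ℚ) =>
              if ballTest D z.1.1 z.1.2 z.2 (Nat.unpair m).2 then a else b) ∘
            (fun tp => (tp.1 (Nat.unpair m).1, tp.2 (Nat.unpair m).2)) := by
        funext tp
        simp only [SigSeq, Function.comp]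
      rw [heq]
      exact Continuous.comp continuous_of_discreteTopology (hmap _ _)
    · intro a m
      have heq : (fun tp : (ℕ → (Fin D → ℚ) × ℚ) × (ℕ → Fin D → ℚ) =>
            PiSeq D 0 tp.1 tp.2 a m)
          = (fun z : ((Fin D → ℚ) × ℚ) × (Fin D → ℚ) =>
              if ballTest D z.1.1 z.1.2 z.2 (Nat.unpair (Nat.unpair m).1).2
              then a - ((Nat.unpair m).2 : ℚ) else a) ∘
            (fun tp => (tp.1 (Nat.unpair (Nat.unpair m).1).1,
              tp.2 (Nat.unpair (Nat.unpair m).1).2)) := by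
        funext tp
        simp only [PiSeq, Function.comp]
      rw [heq]
      exact Continuous.comp continuous_of_discreteTopology (hmap _ _)
  | succ d ih =>
    constructor
    · intro a b m
      by_cases h : (Nat.unpair m).1 = 0
      · have heq : (fun tp : (ℕ → (Fin D → ℚ) × ℚ) × (ℕ → Fin D → ℚ) =>
              SigSeq D (d+1) tp.1 tp.2 a b m) = fun _ => b := by
          funext tp
          simp only [SigSeq, h, if_true]
        rw [heq]
        exact continuous_const
      · have heq : (fun tp : (ℕ → (Fin D → ℚ) × ℚ) × (ℕ → Fin D → ℚ) =>
              SigSeq D (d+1) tp.1 tp.2 a b m)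
            = (fun tp' : (ℕ → (Fin D → ℚ) × ℚ) × (ℕ → Fin D → ℚ) =>
                PiSeq D d tp'.1 tp'.2 a (Nat.unpair m).2) ∘
              (fun tp => ((fun k => tp.1 (Nat.pair ((Nat.unpair m).1 - 1) k)), tp.2)) := by
          funext tp
          simp only [SigSeq, h, if_false, Function.comp]
        rw [heq]
        exact Continuous.comp (ih.2 a (Nat.unpair m).2) (hremap _)
    · intro a m
      have heq : (fun tp : (ℕ → (Fin D → ℚ) × ℚ) × (ℕ → Fin D → ℚ) =>
            PiSeq D (d+1) tp.1 tp.2 a m)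
          = (fun tp' : (ℕ → (Fin D → ℚ) × ℚ) × (ℕ → Fin D → ℚ) =>
              SigSeq D d tp'.1 tp'.2 a (a - ((Nat.unpair (Nat.unpair m).1).2 : ℚ))
                (Nat.unpair m).2) ∘
            (fun tp => ((fun k => tp.1 (Nat.pair (Nat.unpair (Nat.unpair m).1).1 k)), tp.2)) := by
        funext tp
        simp only [PiSeq, Function.comp]
      rw [heq]
      exact Continuous.comp (ih.1 a _ (Nat.unpair m).2) (hremap _)

/-- The finitary test for the `d = 0` case: code `c = ⟨j, k, n⟩` tests whether the
`n`-th approximation of the point certifies membership in the `k`-th ball of the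
name of `f⁻¹((e j, ∞))`. -/
def test0 (s : ℕ → (Fin D → ℚ) × ℚ) (p : ℕ → Fin D → ℚ) (c : ℕ) : Prop :=
  ballTest D (s (Nat.pair (Nat.unpair c).1 (Nat.unpair (Nat.unpair c).2).1)).1
    (s (Nat.pair (Nat.unpair c).1 (Nat.unpair (Nat.unpair c).2).1)).2
    (p (Nat.unpair (Nat.unpair c).2).2) (Nat.unpair (Nat.unpair c).2).2

/-- The apply operator for `d = 0`. -/
noncomputable def Phi0 (e : ℕ ≃ ℚ)
    (sp : (ℕ → (Fin D → ℚ) × ℚ) × (ℕ → (Fin D → ℚ))) (c : ℕ) : ℚ :=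
  if h : ∃ c', test0 D sp.1 sp.2 c' then
    (if test0 D sp.1 sp.2 c then e (Nat.unpair c).1 else e (Nat.unpair (Nat.find h)).1)
  else 0

/-- The apply operator for `d = d' + 1`. -/
noncomputable def PhiPos (d' : ℕ) (e : ℕ ≃ ℚ)
    (sp : (ℕ → (Fin D → ℚ) × ℚ) × (ℕ → (Fin D → ℚ))) (idx : ℕ) : ℚ :=
  PiSeq D d' (fun k => sp.1 (Nat.pair (Nat.unpair (Nat.unpair idx).1).1
      (Nat.pair (Nat.unpair (Nat.unpair idx).1).2 k))) sp.2
    (e (Nat.unpair (Nat.unpair idx).1).1) (Nat.unpair idx).2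

lemma test0_lt {X : Set (EuclideanSpace ℝ (Fin D))} {e : ℕ ≃ ℚ}
    {s : ℕ → (Fin D → ℚ) × ℚ} {f : EuclideanSpace ℝ (Fin D) → ℝ}
    (hs : IsFuncLtName D X 0 e s f) {x : EuclideanSpace ℝ (Fin D)}
    {p : ℕ → Fin D → ℚ} (hp : IsRhoVecName D p x) {c : ℕ}
    (h : test0 D s p c) : ((e (Nat.unpair c).1 : ℚ) : ℝ) < f x := by
  obtain ⟨-, heq⟩ := hs (Nat.unpair c).1
  have hxball : x ∈ ratBall D
      (s (Nat.pair (Nat.unpair c).1 (Nat.unpair (Nat.unpair c).2).1)).1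
      (s (Nat.pair (Nat.unpair c).1 (Nat.unpair (Nat.unpair c).2).1)).2 :=
    (mem_ratBall_iff D hp).mpr ⟨(Nat.unpair (Nat.unpair c).2).2, h⟩
  have : x ∈ {x ∈ X | ((e (Nat.unpair c).1 : ℚ) : ℝ) < f x} := by
    rw [heq]
    exact Set.mem_iUnion.mpr ⟨(Nat.unpair (Nat.unpair c).2).1, hxball⟩
  exact this.2

lemma test0_exists {X : Set (EuclideanSpace ℝ (Fin D))} {e : ℕ ≃ ℚ}
    {s : ℕ → (Fin D → ℚ) × ℚ} {f : EuclideanSpace ℝ (Fin D) → ℝ}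
    (hs : IsFuncLtName D X 0 e s f) {x : EuclideanSpace ℝ (Fin D)} (hx : x ∈ X)
    {p : ℕ → Fin D → ℚ} (hp : IsRhoVecName D p x) {y : ℚ} (hy : (y : ℝ) < f x) :
    ∃ c, test0 D s p c ∧ (Nat.unpair c).1 = e.symm y := by
  obtain ⟨-, heq⟩ := hs (e.symm y)
  have hxS : x ∈ {x ∈ X | ((e (e.symm y) : ℚ) : ℝ) < f x} := by
    refine ⟨hx, ?_⟩
    rw [e.apply_symm_apply]
    exact hy
  rw [heq, Set.mem_iUnion] at hxS
  obtain ⟨k, hk⟩ := hxS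
  obtain ⟨n, hn⟩ := (mem_ratBall_iff D hp).mp hk
  exact ⟨Nat.pair (e.symm y) (Nat.pair k n), by simpa [test0, Nat.unpair_pair] using hn,
    by simp [Nat.unpair_pair]⟩

lemma isOpen_test0_iff (c : ℕ) (b : Prop) :
    IsOpen {sp : (ℕ → (Fin D → ℚ) × ℚ) × (ℕ → (Fin D → ℚ)) | test0 D sp.1 sp.2 c ↔ b} := by
  have : {sp : (ℕ → (Fin D → ℚ) × ℚ) × (ℕ → (Fin D → ℚ)) | test0 D sp.1 sp.2 c ↔ b}
      = (fun sp : (ℕ → (Fin D → ℚ) × ℚ) × (ℕ → (Fin D → ℚ)) =>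
          ((sp.1 (Nat.pair (Nat.unpair c).1 (Nat.unpair (Nat.unpair c).2).1),
            sp.2 (Nat.unpair (Nat.unpair c).2).2) : ((Fin D → ℚ) × ℚ) × (Fin D → ℚ))) ⁻¹'
        {z | ballTest D z.1.1 z.1.2 z.2 (Nat.unpair (Nat.unpair c).2).2 ↔ b} := rfl
  rw [this]
  exact IsOpen.preimage
    (Continuous.prodMk ((continuous_apply _).comp continuous_fst)
      ((continuous_apply _).comp continuous_snd))
    (isOpen_discrete _)

lemma phi0_continuousAt {e : ℕ ≃ ℚ} {sp₀ : (ℕ → (Fin D → ℚ) × ℚ) × (ℕ → (Fin D → ℚ))}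
    (h₀ : ∃ c, test0 D sp₀.1 sp₀.2 c) : ContinuousAt (Phi0 D e) sp₀ := by
  rw [continuousAt_pi]
  intro c
  set N := Nat.find h₀ with hN
  set U := ({sp : (ℕ → (Fin D → ℚ) × ℚ) × (ℕ → (Fin D → ℚ)) |
      test0 D sp.1 sp.2 c ↔ test0 D sp₀.1 sp₀.2 c} ∩
    ⋂ c' ∈ Finset.range (N+1),
      {sp : (ℕ → (Fin D → ℚ) × ℚ) × (ℕ → (Fin D → ℚ)) |
        test0 D sp.1 sp.2 c' ↔ test0 D sp₀.1 sp₀.2 c'}) with hU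
  have hUopen : IsOpen U :=
    (isOpen_test0_iff D c _).inter
      (isOpen_biInter_finset fun c' _ => isOpen_test0_iff D c' _)
  have hsp₀U : sp₀ ∈ U := ⟨Iff.rfl, Set.mem_iInter₂.mpr fun c' _ => Iff.rfl⟩
  have hconst : ∀ sp ∈ U, Phi0 D e sp c = Phi0 D e sp₀ c := by
    intro sp hsp
    obtain ⟨hc, hrest⟩ := hsp
    have hrest' : ∀ c' ≤ N, (test0 D sp.1 sp.2 c' ↔ test0 D sp₀.1 sp₀.2 c') := by
      intro c' hc'
      exact Set.mem_iInter₂.mp hrest c' (Finset.mem_range.mpr (Nat.lt_succ_of_le hc'))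
    have hfind₀ : test0 D sp₀.1 sp₀.2 N := Nat.find_spec h₀
    have h' : ∃ c', test0 D sp.1 sp.2 c' := ⟨N, (hrest' N le_rfl).mpr hfind₀⟩
    have hfind' : Nat.find h' = N := by
      rw [Nat.find_eq_iff]
      exact ⟨(hrest' N le_rfl).mpr hfind₀,
        fun m hm hmtest => Nat.find_min h₀ hm ((hrest' m hm.le).mp hmtest)⟩
    unfold Phi0
    rw [dif_pos h', dif_pos h₀, hfind', ← hN]
    by_cases htc : test0 D sp₀.1 sp₀.2 c
    · rw [if_pos (hc.mpr htc), if_pos htc]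
    · rw [if_neg (fun hh => htc (hc.mp hh)), if_neg htc]
  exact Filter.EventuallyEq.continuousAt
    (Filter.eventuallyEq_of_mem (hUopen.mem_nhds hsp₀U) hconst)

lemma phi0_spec {X : Set (EuclideanSpace ℝ (Fin D))} {e : ℕ ≃ ℚ}
    {s : ℕ → (Fin D → ℚ) × ℚ} {f : EuclideanSpace ℝ (Fin D) → ℝ}
    (hs : IsFuncLtName D X 0 e s f) {x : EuclideanSpace ℝ (Fin D)} (hx : x ∈ X)
    {p : ℕ → Fin D → ℚ} (hp : IsRhoVecName D p x) :
    IsRhoLtKName 0 (Phi0 D e (s, p)) (f x) := by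
  obtain ⟨y₀, hy₀⟩ := exists_rat_lt (f x)
  obtain ⟨c₀, hc₀, -⟩ := test0_exists D hs hx hp hy₀
  have h₀ : ∃ c, test0 D (s, p).1 (s, p).2 c := ⟨c₀, hc₀⟩
  unfold IsRhoLtKName
  have : AltSupInf 0 true (fun n => (((Phi0 D e (s, p) n : ℚ) : ℝ) : EReal))
      = ⨆ n, (((Phi0 D e (s, p) n : ℚ) : ℝ) : EReal) := by simp [AltSupInf]
  rw [this]
  refine (ereal_iSup_eq_real ?_ ?_).symm
  · intro c
    unfold Phi0
    rw [dif_pos h₀]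
    split_ifs with htc
    · exact le_of_lt (EReal.coe_lt_coe_iff.mpr (test0_lt D hs hp htc))
    · exact le_of_lt (EReal.coe_lt_coe_iff.mpr (test0_lt D hs hp (Nat.find_spec h₀)))
  · intro y hy
    obtain ⟨c, hc, hc1⟩ := test0_exists D hs hx hp hy
    refine ⟨c, ?_⟩
    unfold Phi0
    rw [dif_pos h₀, if_pos hc, hc1, e.apply_symm_apply]

end StmtAux

/-- For open `X ⊆ ℝ^D` and `d ≥ 0`: the apply operator
`(f, x) ↦ f x` of Σ_{d+1}-lowersemimeasurable functions on `X` is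
([ρ→ρ_<^{(d)}] × ρ → ρ_<^{(d)})-continuous. -/
theorem stmt19 (D : ℕ) (X : Set (EuclideanSpace ℝ (Fin D))) (hX : IsOpen X)
    (d : ℕ) (e : ℕ ≃ ℚ) :
    ∃ Φ : ((ℕ → (Fin D → ℚ) × ℚ) × (ℕ → (Fin D → ℚ))) → (ℕ → ℚ),
      ContinuousOn Φ {sp | (∃ f : EuclideanSpace ℝ (Fin D) → ℝ,
          IsLowerSemiMeasurable D X d f ∧ IsFuncLtName D X d e sp.1 f) ∧
          ∃ x ∈ X, IsRhoVecName D sp.2 x} ∧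
      ∀ (f : EuclideanSpace ℝ (Fin D) → ℝ), IsLowerSemiMeasurable D X d f →
        ∀ s : ℕ → (Fin D → ℚ) × ℚ, IsFuncLtName D X d e s f →
        ∀ x ∈ X, ∀ p : ℕ → (Fin D → ℚ), IsRhoVecName D p x →
          IsRhoLtKName d (Φ (s, p)) (f x) := by
  classical
  cases d with
  | zero =>
    refine ⟨Phi0 D e, ?_, ?_⟩
    · intro sp hsp
      obtain ⟨⟨f, hf, hsf⟩, x, hx, hpx⟩ := hsp
      obtain ⟨y₀, hy₀⟩ := exists_rat_lt (f x)
      obtain ⟨c₀, hc₀, -⟩ := test0_exists D hsf hx hpx hy₀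
      exact (phi0_continuousAt D ⟨c₀, hc₀⟩).continuousWithinAt
    · intro f hf s hs x hx p hp
      exact phi0_spec D hs hx hp
  | succ d' =>
    refine ⟨PhiPos D d' e, ?_, ?_⟩
    · apply Continuous.continuousOn
      apply continuous_pi
      intro idx
      have heq : (fun sp : (ℕ → (Fin D → ℚ) × ℚ) × (ℕ → (Fin D → ℚ)) =>
            PhiPos D d' e sp idx)
          = (fun tp : (ℕ → (Fin D → ℚ) × ℚ) × (ℕ → Fin D → ℚ) =>
              PiSeq D d' tp.1 tp.2 (e (Nat.unpair (Nat.unpair idx).1).1)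
                (Nat.unpair idx).2) ∘
            (fun sp => ((fun k => sp.1 (Nat.pair (Nat.unpair (Nat.unpair idx).1).1
                (Nat.pair (Nat.unpair (Nat.unpair idx).1).2 k))), sp.2)) := rfl
      rw [heq]
      exact Continuous.comp ((sigPi_continuous D d').2 _ _)
        (Continuous.prodMk
          (continuous_pi fun k => (continuous_apply _).comp continuous_fst) continuous_snd)
    · intro f hf s hs x hx p hp
      have h' : ∀ j, ∃ T : ℕ → Set (EuclideanSpace ℝ (Fin D)),
          (∀ m, IsSigmaName D X d' (fun k => s (Nat.pair j (Nat.pair m k))) (T m)) ∧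
          {x ∈ X | ((e j : ℚ) : ℝ) < f x} = ⋃ m, X \ T m := fun j => hs j
      choose T hT1 hT2 using h'
      unfold IsRhoLtKName
      have hup : AltSupInf (d'+1) true
            (fun n => (((PhiPos D d' e (s, p) n : ℚ) : ℝ) : EReal))
          = ⨆ n, AltSupInf d' false
              (fun m => (((PhiPos D d' e (s, p) (Nat.pair n m) : ℚ) : ℝ) : EReal)) := by
        simp [AltSupInf]
      rw [hup]
      have hcomp : ∀ n, AltSupInf d' false
            (fun m => (((PhiPos D d' e (s, p) (Nat.pair n m) : ℚ) : ℝ) : EReal))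
          = if x ∈ T (Nat.unpair n).1 (Nat.unpair n).2 then ⊥
            else (((e (Nat.unpair n).1 : ℚ) : ℝ) : EReal) := by
        intro n
        have harg : (fun m => (((PhiPos D d' e (s, p) (Nat.pair n m) : ℚ) : ℝ) : EReal))
            = fun m => ((PiSeq D d' (fun k => s (Nat.pair (Nat.unpair n).1
                (Nat.pair (Nat.unpair n).2 k))) p (e (Nat.unpair n).1) m : ℝ) : EReal) := by
          funext m
          simp [PhiPos, Nat.unpair_pair]
        rw [harg]
        exact (sigPi_spec D X d').2 _ _ (hT1 (Nat.unpair n).1 (Nat.unpair n).2) x hx p hp _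
      simp only [hcomp]
      refine (ereal_iSup_eq_real ?_ ?_).symm
      · intro n
        by_cases hxT : x ∈ T (Nat.unpair n).1 (Nat.unpair n).2
        · simp [hxT]
        · rw [if_neg hxT]
          have hmemS : x ∈ {x ∈ X | ((e (Nat.unpair n).1 : ℚ) : ℝ) < f x} := by
            rw [hT2]
            exact Set.mem_iUnion.mpr ⟨(Nat.unpair n).2, ⟨hx, hxT⟩⟩
          exact le_of_lt (EReal.coe_lt_coe_iff.mpr hmemS.2)
      · intro y hy
        have hxS : x ∈ {x ∈ X | ((e (e.symm y) : ℚ) : ℝ) < f x} :=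
          ⟨hx, by rw [e.apply_symm_apply]; exact hy⟩
        rw [hT2, Set.mem_iUnion] at hxS
        obtain ⟨mm, hmm⟩ := hxS
        refine ⟨Nat.pair (e.symm y) mm, ?_⟩
        simp [Nat.unpair_pair, hmm.2, e.apply_symm_apply]
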